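/- Let x⁻, x⁺ : ℝ × ℝ → ℝ be differentiable functions (arguments: parameter θ and time t), and let τ : ℝ → ℝ be differentiable at θ₀, such that x⁻(θ, τ(θ)) = x⁺(θ, τ(θ)) for all θ in a neighborhood of θ₀. Then ∂x⁺/∂θ(θ₀, τ(θ₀)) = ∂x⁻/∂θ(θ₀, τ(θ₀)) + [∂x⁻/∂t(θ₀, τ(θ₀)) − ∂x⁺/∂t(θ₀, τ(θ₀))] · τ'(θ₀). -/

import Mathlib

open Real Filter

section PartialDerivatives

variable {𝕜 E : Type*} [NontriviallyNormedField 𝕜] [NormedAddCommGroup E] [NormedSpace 𝕜 E]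
  {f : 𝕜 × 𝕜 → E} {f' : 𝕜 × 𝕜 →L[𝕜] E}

theorem HasFDerivAt.hasDerivAt_partial_fst {a b : 𝕜} (hf : HasFDerivAt f f' (a, b)) :
    HasDerivAt (fun x => f (x, b)) (f' (1, 0)) a :=
  hf.comp_hasDerivAt a ((hasDerivAt_id a).prodMk (hasDerivAt_const a b))

theorem HasFDerivAt.hasDerivAt_partial_snd {a b : 𝕜} (hf : HasFDerivAt f f' (a, b)) :
    HasDerivAt (fun y => f (a, y)) (f' (0, 1)) b :=
  hf.comp_hasDerivAt b ((hasDerivAt_const b a).prodMk (hasDerivAt_id b))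

theorem DifferentiableAt.hasDerivAt_comp_graph {τ : 𝕜 → 𝕜} {τ' a : 𝕜}
    (hf : DifferentiableAt 𝕜 f (a, τ a)) (hτ : HasDerivAt τ τ' a) :
    HasDerivAt (fun x => f (x, τ x))
      (deriv (fun x => f (x, τ a)) a + τ' • deriv (fun y => f (a, y)) (τ a)) a := by
  have hF := hf.hasFDerivAt
  have hsplit : ((1 : 𝕜), τ') = (1, 0) + τ' • ((0 : 𝕜), (1 : 𝕜)) := by simp
  rw [hF.hasDerivAt_partial_fst.deriv, hF.hasDerivAt_partial_snd.deriv, ← map_smul, ← map_add,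
    ← hsplit]
  exact hF.comp_hasDerivAt a ((hasDerivAt_id a).prodMk hτ)

end PartialDerivatives

/-- IPA boundary condition at an event time: if the state is continuous
across the event, i.e. `x⁻(θ, τ(θ)) = x⁺(θ, τ(θ))` near `θ₀`, then the state
sensitivity jumps as `x⁺_θ = x⁻_θ + [x⁻_t − x⁺_t] τ'`. -/
theorem ipa_state_derivative_jump
    (xm xp : ℝ × ℝ → ℝ) (hxm : Differentiable ℝ xm) (hxp : Differentiable ℝ xp)
    (τ : ℝ → ℝ) (θ₀ : ℝ) (hτ : DifferentiableAt ℝ τ θ₀)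
    (hcont : ∀ᶠ θ in nhds θ₀, xm (θ, τ θ) = xp (θ, τ θ)) :
    deriv (fun θ => xp (θ, τ θ₀)) θ₀ =
      deriv (fun θ => xm (θ, τ θ₀)) θ₀ +
        (deriv (fun t => xm (θ₀, t)) (τ θ₀) - deriv (fun t => xp (θ₀, t)) (τ θ₀))
          * deriv τ θ₀ := by
  have hm := (hxm (θ₀, τ θ₀)).hasDerivAt_comp_graph hτ.hasDerivAt
  have hp := (hxp (θ₀, τ θ₀)).hasDerivAt_comp_graph hτ.hasDerivAt
  have htotal := hm.unique (hp.congr_of_eventuallyEq hcont)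
  simp only [smul_eq_mul] at htotal
  linarith
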